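/- Any n-1 shares of the secret splitting scheme reveal nothing about the secret: for uniformly random r_1,...,r_{n-1} ∈ ℤ/qℤ, any proper subset of the shares {A_1,...,A_n} of size n-1 has a distribution independent of the secret s. -/
import Mathlib

private lemma pmf_map_uniform_of_bijective {α β : Type*} [Fintype α] [Fintype β]
    [Nonempty α] [Nonempty β] (f : α → β) (hf : Function.Bijective f) :
    PMF.map f (PMF.uniformOfFintype α) = PMF.uniformOfFintype β := by
  ext b
  obtain ⟨a, rfl⟩ := hf.surjective b
  rw [PMF.map_apply, PMF.uniformOfFintype_apply, tsum_eq_single a]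
  · rw [if_pos rfl, PMF.uniformOfFintype_apply, Fintype.card_of_bijective hf]
  · intro a' ha'
    exact if_neg fun h => ha' (hf.injective h.symm)

private lemma zpow_eq_zpow_iff_zmod {G : Type*} [Group G]
    (q : ℕ) (g : G) (ho : orderOf g = q) {x y : ℤ} :
    g ^ x = g ^ y ↔ (x : ZMod q) = (y : ZMod q) := by
  rw [show (g ^ x = g ^ y) ↔ g ^ (x - y) = 1 by rw [zpow_sub, mul_inv_eq_one],
    ← orderOf_dvd_iff_zpow_eq_one, ho, ← ZMod.intCast_zmod_eq_zero_iff_dvd,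
    Int.cast_sub, sub_eq_zero]

/-- Privacy of the secret splitting scheme: with i.i.d. uniform exponents
r_1,...,r_{n-1} in ℤ/qℤ, shares A_i = g^{r_i} (i < n-1, 0-indexed) and
A_{n-1} = g^{s - ∑ r_i}, the joint distribution of the shares with any one
share j omitted is uniform on G^{n-1}; in particular it does not depend on the
secret s. -/
theorem secret_splitting_privacy {G : Type*} [CommGroup G] [Fintype G] [DecidableEq G]
    (q : ℕ) [Fact (Nat.Prime q)] [NeZero q]
    (hcard : Fintype.card G = q)
    (g : G) (hg : ∀ x : G, x ∈ Subgroup.zpowers g)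
    (n : ℕ) (hn : 2 ≤ n) (s : ℤ) (j : Fin n) :
    PMF.map
      (fun (r : Fin (n - 1) → ZMod q) (i : {i : Fin n // i ≠ j}) =>
        if h : ((i : Fin n) : ℕ) < n - 1 then g ^ ((r ⟨(i : Fin n), h⟩).val : ℤ)
        else g ^ (s - ∑ k, ((r k).val : ℤ)))
      (PMF.uniformOfFintype (Fin (n - 1) → ZMod q))
      = PMF.uniformOfFintype ({i : Fin n // i ≠ j} → G) := by
  classical
  have ho : orderOf g = q := by
    rw [orderOf_eq_card_of_forall_mem_zpowers hg, Nat.card_eq_fintype_card, hcard]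
  haveI : Nonempty G := ⟨g⟩
  haveI : Nonempty {i : Fin n // i ≠ j} := by
    obtain ⟨i, hi⟩ := Fintype.exists_ne_of_one_lt_card (by simp; omega : 1 < Fintype.card (Fin n)) j
    exact ⟨⟨i, hi⟩⟩
  apply pmf_map_uniform_of_bijective
  rw [Fintype.bijective_iff_injective_and_card]
  have hval : ∀ a b : ZMod q, g ^ ((a.val : ℤ)) = g ^ ((b.val : ℤ)) → a = b := by
    intro a b hab
    have := (zpow_eq_zpow_iff_zmod q g ho).mp hab
    simpa [ZMod.natCast_val, ZMod.cast_id] using this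
  constructor
  · intro r r' h
    have hco : ∀ k : Fin (n - 1), (k : ℕ) ≠ (j : ℕ) → r k = r' k := by
      intro k hk
      have hklt : (k : ℕ) < n := lt_of_lt_of_le k.2 (Nat.sub_le n 1)
      have hi : (⟨(k : ℕ), hklt⟩ : Fin n) ≠ j := fun hcon => hk (by
        simpa [Fin.ext_iff] using hcon)
      have h1 := congrFun h ⟨⟨(k : ℕ), hklt⟩, hi⟩
      simp only [dif_pos (show ((⟨(k : ℕ), hklt⟩ : Fin n) : ℕ) < n - 1 from k.2)] at h1
      have := hval _ _ h1
      simpa using this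
    funext k
    by_cases hk : (k : ℕ) ≠ (j : ℕ)
    · exact hco k hk
    · push_neg at hk
      have hjlt : (j : ℕ) < n - 1 := hk ▸ k.2
      have hlast : (⟨n - 1, by omega⟩ : Fin n) ≠ j := fun hcon => by
        simp only [Fin.ext_iff, Fin.val_mk] at hcon; omega
      have h2 := congrFun h ⟨⟨n - 1, by omega⟩, hlast⟩
      simp only [dif_neg (lt_irrefl (n - 1))] at h2
      have hsum := (zpow_eq_zpow_iff_zmod q g ho).mp h2
      push_cast [ZMod.natCast_val, ZMod.cast_id] at hsum
      have hsum' : (∑ m, r m) = ∑ m, r' m := by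
        have := sub_right_inj.mp hsum
        simpa using this
      rw [← Finset.add_sum_erase _ _ (Finset.mem_univ k),
        ← Finset.add_sum_erase _ _ (Finset.mem_univ k)] at hsum'
      have hrest : ∑ m ∈ Finset.univ.erase k, r m = ∑ m ∈ Finset.univ.erase k, r' m := by
        refine Finset.sum_congr rfl fun m hm => hco m ?_
        have hmk : m ≠ k := (Finset.mem_erase.mp hm).1
        rw [← hk]
        exact fun hcon => hmk (Fin.ext hcon)
      rw [hrest] at hsum'
      exact add_right_cancel hsum'
  · rw [Fintype.card_fun, Fintype.card_fun, ZMod.card, hcard, Fintype.card_fin]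
    congr 1
    rw [Fintype.card_subtype_compl, Fintype.card_subtype_eq, Fintype.card_fin]
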